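/- Let X and A be countable nonempty sets, let P : X × A × X → [0,1] with ∑_{x'} P(x, a, x') = 1 for all (x, a), let π : X × A → [0,1] with ∑_{a'} π(x', a') = 1 for all x', let r : X × A → ℝ be bounded, let γ ∈ [0,1), and let N ≥ 1. Define the projected distributional Bellman operator Φ on bounded functions θ : X × A → ℝ^N by (Φθ)_i(x, a) = F_{μ_θ(x,a)}⁻¹((2i−1)/(2N)), where μ_θ(x, a) = ∑_{x'} ∑_{a'} P(x, a, x')·π(x', a') · (1/N) ∑_{j=1}^N δ_{r(x,a) + γ·θ_j(x', a')}. Then Φ has a unique fixed point in the space of bounded functions θ : X × A → ℝ^N. -/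

import Mathlib

open MeasureTheory Set
open scoped ENNReal

/-- The CDF of a measure on ℝ: `F(y) = μ((-∞, y])`. -/
noncomputable def cdfFn (μ : Measure ℝ) (y : ℝ) : ℝ := (μ (Iic y)).toReal

/-- The quantile function (generalized inverse CDF): `F⁻¹(ω) = inf {y | ω ≤ F(y)}`. -/
noncomputable def quantileFn (μ : Measure ℝ) (ω : ℝ) : ℝ := sInf {y : ℝ | ω ≤ cdfFn μ y}

/-- The distributional Bellman backup at `(x, a)` of the quantile value distribution with atoms
`θ`, i.e. `μ_θ(x,a) = ∑_{x',a'} P(x,a,x') π(x',a') (1/N) ∑ⱼ δ_{r(x,a) + γ θ_j(x',a')}`. -/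
noncomputable def bellmanBackup {X A : Type*} [Countable X] [Countable A]
    (P : X → A → X → ℝ) (π : X → A → ℝ) (r : X → A → ℝ) (γ : ℝ) (N : ℕ)
    (θ : X × A → Fin N → ℝ) (x : X) (a : A) : Measure ℝ :=
  Measure.sum fun x' : X => Measure.sum fun a' : A =>
    ENNReal.ofReal (P x a x' * π x' a') •
      ((N : ℝ≥0∞)⁻¹ • ∑ j : Fin N, Measure.dirac (r x a + γ * θ (x', a') j))

/-- The projected distributional Bellman operator: `(Φθ)ᵢ(x,a)` is the quantile midpoint
`F⁻¹((2i-1)/(2N))` of the Bellman backup `μ_θ(x,a)` (with `i : Fin N` 0-indexed). -/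
noncomputable def projBellman {X A : Type*} [Countable X] [Countable A]
    (P : X → A → X → ℝ) (π : X → A → ℝ) (r : X → A → ℝ) (γ : ℝ) (N : ℕ)
    (θ : X × A → Fin N → ℝ) : X × A → Fin N → ℝ :=
  fun q i => quantileFn (bellmanBackup P π r γ N θ q.1 q.2) ((2 * (i : ℝ) + 1) / (2 * N))

/-! The backup `μ_θ(x,a)` is a probability measure whose atoms `r(x,a) + γ θⱼ(x',a')` move by at
most `γ K` when `θ` moves by `K` in sup norm. Raising every atom by at most `γ K` shifts the CDF
to the right by at most `γ K`, so every quantile moves by at most `γ K`: `Φ` is a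
`γ`-contraction of the complete space of bounded functions `X × A → ℝ^N`, and Banach's fixed
point theorem applies. -/

open Function BoundedContinuousFunction
open scoped NNReal

theorem existsUnique_bounded_fixedPoint {α E : Type*} [NormedAddCommGroup E] [CompleteSpace E]
    (Φ : (α → E) → α → E) {K : ℝ≥0} (hK : K < 1)
    (hbdd : ∀ f, (∃ C, ∀ q, ‖f q‖ ≤ C) → ∃ C, ∀ q, ‖Φ f q‖ ≤ C)
    (hdist : ∀ f g, (∃ C, ∀ q, ‖f q‖ ≤ C) → (∃ C, ∀ q, ‖g q‖ ≤ C) → ∀ D, 0 ≤ D →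
      (∀ q, dist (f q) (g q) ≤ D) → ∀ q, dist (Φ f q) (Φ g q) ≤ K * D) :
    ∃! f : α → E, (∃ C, ∀ q, ‖f q‖ ≤ C) ∧ Φ f = f := by
  let : TopologicalSpace α := ⊥
  have : DiscreteTopology α := ⟨rfl⟩
  let ofBdd (f : α → E) (hf : ∃ C, ∀ q, ‖f q‖ ≤ C) : α →ᵇ E :=
    ofNormedAddCommGroup f continuous_of_discreteTopology _ hf.choose_spec
  have bdd (f : α →ᵇ E) : ∃ C, ∀ q, ‖f q‖ ≤ C := ⟨‖f‖, f.norm_coe_le_norm⟩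
  let F (f : α →ᵇ E) : α →ᵇ E := ofBdd (Φ f) (hbdd f (bdd f))
  have hF : ContractingWith K F := by
    refine ⟨hK, LipschitzWith.of_dist_le_mul fun f g => ?_⟩
    exact (dist_le (by positivity)).2 <|
      hdist f g (bdd f) (bdd g) _ dist_nonneg dist_coe_le_dist
  refine ⟨⇑(ContractingWith.fixedPoint F hF),
    ⟨bdd _, congrArg (⇑) (hF.fixedPoint_isFixedPt (f := F))⟩, ?_⟩
  rintro f ⟨hf, hfix⟩
  have hfixF : IsFixedPt F (ofBdd f hf) := ext (congrFun hfix)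
  exact congrArg (⇑) (hF.fixedPoint_unique (f := F) hfixF)

theorem exists_forall_abs_le_iff_exists_forall_norm_le {α ι : Type*} [Fintype ι]
    (f : α → ι → ℝ) : (∃ M, ∀ q j, |f q j| ≤ M) ↔ ∃ C, ∀ q, ‖f q‖ ≤ C := by
  constructor
  · rintro ⟨M, hM⟩
    exact ⟨max M 0, fun q => (pi_norm_le_iff_of_nonneg (le_max_right _ _)).2 fun j =>
      (Real.norm_eq_abs _).trans_le ((hM q j).trans (le_max_left _ _))⟩
  · rintro ⟨C, hC⟩
    exact ⟨C, fun q j => (Real.norm_eq_abs _).symm.trans_le ((norm_le_pi_norm _ j).trans (hC q))⟩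

theorem abs_add_mul_le {r t γ Mr M : ℝ} (hr : |r| ≤ Mr) (ht : |t| ≤ M) (hγ : 0 ≤ γ) :
    |r + γ * t| ≤ Mr + γ * M := by
  refine (abs_add_le _ _).trans (add_le_add hr ?_)
  rw [abs_mul, abs_of_nonneg hγ]
  exact mul_le_mul_of_nonneg_left ht hγ

theorem ENNReal.tsum_ofReal_eq_one {ι : Type*} {p : ι → ℝ} (hp0 : ∀ i, 0 ≤ p i)
    (hp : ∑' i, p i = 1) : ∑' i, ENNReal.ofReal (p i) = 1 := by
  have hsum : Summable p := by
    by_contra h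
    rw [tsum_eq_zero_of_not_summable h] at hp
    exact zero_ne_one hp
  rw [← ENNReal.ofReal_tsum_of_nonneg hp0 hsum, hp, ENNReal.ofReal_one]

theorem ENNReal.tsum_tsum_ofReal_mul_eq_one {ι κ : Type*} {p : ι → ℝ} {q : ι → κ → ℝ}
    (hp0 : ∀ i, 0 ≤ p i) (hp : ∑' i, p i = 1) (hq0 : ∀ i k, 0 ≤ q i k)
    (hq : ∀ i, ∑' k, q i k = 1) : ∑' i, ∑' k, ENNReal.ofReal (p i * q i k) = 1 := by
  simp_rw [ENNReal.ofReal_mul (hp0 _), ENNReal.tsum_mul_left,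
    ENNReal.tsum_ofReal_eq_one (hq0 _) (hq _), mul_one]
  exact ENNReal.tsum_ofReal_eq_one hp0 hp

section Quantile

variable {μ ν : Measure ℝ} {ω lo hi : ℝ}

theorem le_of_le_cdfFn (hμ : ∀ᵐ y ∂μ, y ∈ Icc lo hi) (hω : 0 < ω) {y : ℝ}
    (hy : ω ≤ cdfFn μ y) : lo ≤ y := by
  by_contra! hlt
  have hsub : Iic y ⊆ {z | z ∉ Icc lo hi} := fun z hz hmem => (hmem.1.trans hz).not_gt hlt
  have hzero : μ (Iic y) = 0 := measure_mono_null hsub (ae_iff.1 hμ)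
  rw [cdfFn, hzero, ENNReal.toReal_zero] at hy
  linarith

theorem cdfFn_eq_one [IsProbabilityMeasure μ] (hμ : ∀ᵐ y ∂μ, y ∈ Icc lo hi) :
    cdfFn μ hi = 1 := by
  have hsub : (Iic hi)ᶜ ⊆ {z | z ∉ Icc lo hi} := fun z hz hmem => hz hmem.2
  have hcompl : μ (Iic hi)ᶜ = 0 := measure_mono_null hsub (ae_iff.1 hμ)
  rw [cdfFn, (prob_compl_eq_zero_iff measurableSet_Iic).1 hcompl, ENNReal.toReal_one]

theorem bddBelow_cdfFn_superlevel (hμ : ∀ᵐ y ∂μ, y ∈ Icc lo hi) (hω : 0 < ω) :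
    BddBelow {y | ω ≤ cdfFn μ y} :=
  ⟨lo, fun _ => le_of_le_cdfFn hμ hω⟩

theorem le_cdfFn_of_le_one [IsProbabilityMeasure μ] (hμ : ∀ᵐ y ∂μ, y ∈ Icc lo hi)
    (hω : ω ≤ 1) : ω ≤ cdfFn μ hi := by
  rwa [cdfFn_eq_one hμ]

theorem quantileFn_mem_Icc [IsProbabilityMeasure μ] (hμ : ∀ᵐ y ∂μ, y ∈ Icc lo hi)
    (hω : ω ∈ Ioc 0 1) : quantileFn μ ω ∈ Icc lo hi :=
  ⟨le_csInf ⟨hi, le_cdfFn_of_le_one hμ hω.2⟩ fun _ => le_of_le_cdfFn hμ hω.1,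
    csInf_le (bddBelow_cdfFn_superlevel hμ hω.1) (le_cdfFn_of_le_one hμ hω.2)⟩

theorem quantileFn_le_add [IsFiniteMeasure μ] [IsProbabilityMeasure ν] {lo' hi' c : ℝ}
    (hμ : ∀ᵐ y ∂μ, y ∈ Icc lo hi) (hν : ∀ᵐ y ∂ν, y ∈ Icc lo' hi') (hω : ω ∈ Ioc 0 1)
    (h : ∀ y, ν (Iic y) ≤ μ (Iic (y + c))) : quantileFn μ ω ≤ quantileFn ν ω + c := by
  have : quantileFn μ ω - c ≤ quantileFn ν ω := by
    refine le_csInf ⟨hi', le_cdfFn_of_le_one hν hω.2⟩ fun y hy => sub_le_iff_le_add.2 ?_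
    exact csInf_le (bddBelow_cdfFn_superlevel hμ hω.1)
      (hy.trans (ENNReal.toReal_mono (measure_ne_top _ _) (h y)))
  linarith

end Quantile

theorem quantileMidpoint_mem_Ioc {N : ℕ} (i : Fin N) :
    (2 * (i : ℝ) + 1) / (2 * N) ∈ Ioc 0 1 := by
  have hi : (i : ℝ) + 1 ≤ N := by exact_mod_cast i.isLt
  have hN : (0 : ℝ) < 2 * N := mul_pos two_pos (Nat.cast_pos.2 i.pos)
  exact ⟨by positivity, (div_le_one hN).2 (by linarith)⟩

section BellmanBackup

variable {X A : Type*} [Countable X] [Countable A] (P : X → A → X → ℝ) (π : X → A → ℝ)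
  (r : X → A → ℝ) {γ : ℝ} {N : ℕ}

theorem bellmanBackup_apply (θ : X × A → Fin N → ℝ) (x : X) (a : A) {s : Set ℝ}
    (hs : MeasurableSet s) :
    bellmanBackup P π r γ N θ x a s = ∑' x', ∑' a', ENNReal.ofReal (P x a x' * π x' a') *
      ((N : ℝ≥0∞)⁻¹ * ∑ j, Measure.dirac (r x a + γ * θ (x', a') j) s) := by
  simp only [bellmanBackup, Measure.sum_apply _ hs, Measure.smul_apply, smul_eq_mul,
    Measure.finsetSum_apply]

theorem isProbabilityMeasure_bellmanBackup (hP0 : ∀ x a x', 0 ≤ P x a x')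
    (hP : ∀ x a, ∑' x', P x a x' = 1) (hπ0 : ∀ x' a', 0 ≤ π x' a')
    (hπ : ∀ x', ∑' a', π x' a' = 1) (hN : N ≠ 0) (θ : X × A → Fin N → ℝ) (x : X) (a : A) :
    IsProbabilityMeasure (bellmanBackup P π r γ N θ x a) := by
  constructor
  simp only [bellmanBackup_apply P π r θ x a MeasurableSet.univ, measure_univ,
    Finset.sum_const, Finset.card_univ, Fintype.card_fin, nsmul_eq_mul, mul_one,
    ENNReal.inv_mul_cancel (Nat.cast_ne_zero.2 hN) (ENNReal.natCast_ne_top N)]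
  exact ENNReal.tsum_tsum_ofReal_mul_eq_one (hP0 x a) (hP x a) hπ0 hπ

theorem bellmanBackup_mono {θ θ' : X × A → Fin N → ℝ} {x : X} {a : A} {s t : Set ℝ}
    (hs : MeasurableSet s) (ht : MeasurableSet t)
    (h : ∀ q j, r x a + γ * θ' q j ∈ s → r x a + γ * θ q j ∈ t) :
    bellmanBackup P π r γ N θ' x a s ≤ bellmanBackup P π r γ N θ x a t := by
  rw [bellmanBackup_apply P π r θ' x a hs, bellmanBackup_apply P π r θ x a ht]
  refine ENNReal.tsum_le_tsum fun x' => ENNReal.tsum_le_tsum fun a' =>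
    mul_le_mul_right (mul_le_mul_right (Finset.sum_le_sum fun j _ => ?_) _) _
  by_cases hmem : r x a + γ * θ' (x', a') j ∈ s
  · rw [Measure.dirac_apply_of_mem (h _ j hmem)]
    exact prob_le_one
  · rw [Measure.dirac_apply' _ hs, indicator_of_notMem hmem]
    exact zero_le

theorem ae_mem_bellmanBackup {θ : X × A → Fin N → ℝ} {x : X} {a : A} {s : Set ℝ}
    (hs : MeasurableSet s) (h : ∀ q j, r x a + γ * θ q j ∈ s) :
    ∀ᵐ y ∂bellmanBackup P π r γ N θ x a, y ∈ s := by
  refine ae_iff.2 (le_zero_iff.1 ?_)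
  calc bellmanBackup P π r γ N θ x a sᶜ ≤ bellmanBackup P π r γ N θ x a ∅ :=
        bellmanBackup_mono P π r hs.compl MeasurableSet.empty fun q j hmem => hmem (h q j)
    _ = 0 := measure_empty

theorem ae_mem_Icc_bellmanBackup (hγ : 0 ≤ γ) {Mr M : ℝ} (hr : ∀ x a, |r x a| ≤ Mr)
    {θ : X × A → Fin N → ℝ} (hθ : ∀ q j, |θ q j| ≤ M) (x : X) (a : A) :
    ∀ᵐ y ∂bellmanBackup P π r γ N θ x a, y ∈ Icc (-(Mr + γ * M)) (Mr + γ * M) :=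
  ae_mem_bellmanBackup P π r measurableSet_Icc fun q j =>
    abs_le.1 (abs_add_mul_le (hr x a) (hθ q j) hγ)

variable [∀ θ x a, IsProbabilityMeasure (bellmanBackup P π r γ N θ x a)]

theorem abs_projBellman_le (hγ : 0 ≤ γ) {Mr M : ℝ} (hr : ∀ x a, |r x a| ≤ Mr)
    {θ : X × A → Fin N → ℝ} (hθ : ∀ q j, |θ q j| ≤ M) (q : X × A) (i : Fin N) :
    |projBellman P π r γ N θ q i| ≤ Mr + γ * M :=
  abs_le.2 <| quantileFn_mem_Icc (ae_mem_Icc_bellmanBackup P π r hγ hr hθ q.1 q.2)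
    (quantileMidpoint_mem_Ioc i)

theorem projBellman_le_add (hγ : 0 ≤ γ) {Mr M M' K : ℝ} (hr : ∀ x a, |r x a| ≤ Mr)
    {θ θ' : X × A → Fin N → ℝ} (hθ : ∀ q j, |θ q j| ≤ M) (hθ' : ∀ q j, |θ' q j| ≤ M')
    (hK : ∀ q j, θ q j ≤ θ' q j + K) (q : X × A) (i : Fin N) :
    projBellman P π r γ N θ q i ≤ projBellman P π r γ N θ' q i + γ * K := by
  refine quantileFn_le_add (ae_mem_Icc_bellmanBackup P π r hγ hr hθ q.1 q.2)
    (ae_mem_Icc_bellmanBackup P π r hγ hr hθ' q.1 q.2) (quantileMidpoint_mem_Ioc i) fun y => ?_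
  refine bellmanBackup_mono P π r measurableSet_Iic measurableSet_Iic fun q' j hy => ?_
  have := mul_le_mul_of_nonneg_left (hK q' j) hγ
  simp only [mem_Iic] at hy ⊢
  linarith

theorem abs_projBellman_sub_le (hγ : 0 ≤ γ) {Mr M M' K : ℝ} (hr : ∀ x a, |r x a| ≤ Mr)
    {θ θ' : X × A → Fin N → ℝ} (hθ : ∀ q j, |θ q j| ≤ M) (hθ' : ∀ q j, |θ' q j| ≤ M')
    (hK : ∀ q j, |θ q j - θ' q j| ≤ K) (q : X × A) (i : Fin N) :
    |projBellman P π r γ N θ q i - projBellman P π r γ N θ' q i| ≤ γ * K := by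
  have hle := projBellman_le_add P π r hγ hr hθ hθ' (K := K) (fun q j => by
    linarith [(abs_sub_le_iff.1 (hK q j)).1]) q i
  have hge := projBellman_le_add P π r hγ hr hθ' hθ (K := K) (fun q j => by
    linarith [(abs_sub_le_iff.1 (hK q j)).2]) q i
  exact abs_sub_le_iff.2 ⟨by linarith, by linarith⟩

end BellmanBackup

theorem projected_bellman_unique_fixed_point_general
    {X A : Type*} [Countable X] [Countable A]
    (P : X → A → X → ℝ) (hP01 : ∀ x a x', P x a x' ∈ Set.Icc (0:ℝ) 1)
    (hP : ∀ x a, ∑' x', P x a x' = 1)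
    (π : X → A → ℝ) (hπ01 : ∀ x' a', π x' a' ∈ Set.Icc (0:ℝ) 1)
    (hπ : ∀ x', ∑' a', π x' a' = 1)
    (r : X → A → ℝ) (hr : ∃ M : ℝ, ∀ x a, |r x a| ≤ M)
    (γ : ℝ) (hγ : γ ∈ Set.Ico (0:ℝ) 1) (N : ℕ) (hN : 1 ≤ N) :
    ∃! θ : X × A → Fin N → ℝ,
      (∃ M : ℝ, ∀ q j, |θ q j| ≤ M) ∧ projBellman P π r γ N θ = θ := by
  obtain ⟨hγ0, hγ1⟩ := hγ
  obtain ⟨Mr, hr⟩ := hr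
  have : ∀ θ x a, IsProbabilityMeasure (bellmanBackup P π r γ N θ x a) :=
    isProbabilityMeasure_bellmanBackup P π r (fun x a x' => (hP01 x a x').1) hP
      (fun x' a' => (hπ01 x' a').1) hπ (by omega)
  simp_rw [exists_forall_abs_le_iff_exists_forall_norm_le]
  refine existsUnique_bounded_fixedPoint _ (K := γ.toNNReal) (by simpa using hγ1)
    (fun θ hθ => ?_) (fun θ θ' hθ hθ' D hD hdist q => ?_)
  · obtain ⟨M, hM⟩ := (exists_forall_abs_le_iff_exists_forall_norm_le θ).2 hθ
    exact (exists_forall_abs_le_iff_exists_forall_norm_le _).1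
      ⟨_, abs_projBellman_le P π r hγ0 hr hM⟩
  · obtain ⟨M, hM⟩ := (exists_forall_abs_le_iff_exists_forall_norm_le θ).2 hθ
    obtain ⟨M', hM'⟩ := (exists_forall_abs_le_iff_exists_forall_norm_le θ').2 hθ'
    rw [Real.coe_toNNReal _ hγ0, dist_pi_le_iff (by positivity)]
    have hcoord q' j : |θ q' j - θ' q' j| ≤ D :=
      (Real.dist_eq _ _).symm.trans_le ((dist_le_pi_dist _ _ j).trans (hdist q'))
    exact fun i =>
      (Real.dist_eq _ _).trans_le (abs_projBellman_sub_le P π r hγ0 hr hM hM' hcoord q i)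

/-- with bounded rewards, the projected distributional Bellman operator `Φ` has a
unique fixed point among bounded quantile value distributions `θ : X × A → ℝ^N`. -/
theorem projected_bellman_unique_fixed_point
    {X A : Type*} [Countable X] [Countable A] [Nonempty X] [Nonempty A]
    (P : X → A → X → ℝ) (hP01 : ∀ x a x', P x a x' ∈ Set.Icc (0:ℝ) 1)
    (hP : ∀ x a, ∑' x', P x a x' = 1)
    (π : X → A → ℝ) (hπ01 : ∀ x' a', π x' a' ∈ Set.Icc (0:ℝ) 1)
    (hπ : ∀ x', ∑' a', π x' a' = 1)
    (r : X → A → ℝ) (hr : ∃ M : ℝ, ∀ x a, |r x a| ≤ M)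
    (γ : ℝ) (hγ : γ ∈ Set.Ico (0:ℝ) 1) (N : ℕ) (hN : 1 ≤ N) :
    ∃! θ : X × A → Fin N → ℝ,
      (∃ M : ℝ, ∀ q j, |θ q j| ≤ M) ∧ projBellman P π r γ N θ = θ :=
  projected_bellman_unique_fixed_point_general P hP01 hP π hπ01 hπ r hr γ hγ N hN
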